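/- Let K ⊆ ℝ be a real quadratic number field and (A_n)_n a sequence with values in K∖ℚ such that there exists β ∈ K∖ℚ with either A_n − A_n′ = β for all n or A_n − A_n′ = (−1)^n β for all n, and such that the sequence of rational numbers (A_n + A_n′)_n has bounded denominators. Then the sequence (ℓ(A_n))_n of period lengths is bounded. -/

import Mathlib

/-!
Since `conj` has order at most two, applying it to `A 0 - conj (A 0) = β` gives `conj β = -β`, so
`β ^ 2 = s` is rational. With `D (A n + conj (A n)) = m n`, every `A n` is then a root of the
integer quadratic `4 D² den(s) X² - 4 D den(s) m n X + den(s) (m n)² - num(s) D²`, whose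
discriminant `Δ = 16 D⁴ den(s) num(s)` does not depend on `n`. It remains to bound the period
length of a quadratic irrational `x` in terms of its discriminant.

Run the continued fraction algorithm on `x` and, with the same partial quotients, on its conjugate
`y`; the pairs `(x_k, y_k)` stay conjugate roots of integer quadratics `a X² + b X + c` of
discriminant `Δ = a² (x_k - y_k)²`. As long as `y_k > 0`, both `x_k, y_k > 1`, so `|x_k - y_k|`
grows strictly and `|a|` descends strictly; hence eventually `y_k < 0 < x_k`, and this persists.
Then `a c < 0`, so `|a|, |b|, |c| ≤ Δ`; by pigeonhole two indices share the same quadratic, whose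
unique positive root is `x_k`, so the expansion is periodic with period at most `(2 Δ + 1)³`.
-/

open Polynomial Filter

/-- The Gauss map used to generate the continued fraction expansion of a real number. -/
noncomputable def cfMap (x : ℝ) : ℝ := if Int.fract x = 0 then 0 else (Int.fract x)⁻¹

/-- The `i`-th partial quotient `a_i(x)` of the continued fraction expansion of `x`. -/
noncomputable def cfa (x : ℝ) (i : ℕ) : ℤ := ⌊cfMap^[i] x⌋

/-- The minimal eventual period length `ℓ(x)` of the continued fraction expansion of `x`,
with the convention `ℓ(x) = 0` for rational `x`. -/
noncomputable def periodLength (x : ℝ) : ℕ :=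
  open scoped Classical in
  if Irrational x then sInf {p : ℕ | 0 < p ∧ ∃ N : ℕ, ∀ n ≥ N, cfa x (n + p) = cfa x n} else 0

section Quadratic

variable {R : Type*} [CommRing R] [IsDomain R] {a b c x y : R}

theorem quadratic_add_roots (hxy : x ≠ y) (hx : a * x ^ 2 + b * x + c = 0)
    (hy : a * y ^ 2 + b * y + c = 0) : a * (x + y) = -b := by
  have h : (x - y) * (a * (x + y) + b) = 0 := by linear_combination hx - hy
  linear_combination (mul_eq_zero.1 h).resolve_left (sub_ne_zero.2 hxy)

theorem quadratic_mul_roots (hxy : x ≠ y) (hx : a * x ^ 2 + b * x + c = 0)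
    (hy : a * y ^ 2 + b * y + c = 0) : a * (x * y) = c := by
  linear_combination x * quadratic_add_roots hxy hx hy - hx

theorem discrim_eq_sq_mul_sq_sub (hxy : x ≠ y) (hx : a * x ^ 2 + b * x + c = 0)
    (hy : a * y ^ 2 + b * y + c = 0) : discrim a b c = a ^ 2 * (x - y) ^ 2 := by
  rw [discrim]
  linear_combination (b - a * (x + y)) * quadratic_add_roots hxy hx hy
    + 4 * a * quadratic_mul_roots hxy hx hy

theorem eq_or_eq_of_quadratic (ha : a ≠ 0) (hxy : x ≠ y) (hx : a * x ^ 2 + b * x + c = 0)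
    (hy : a * y ^ 2 + b * y + c = 0) {t : R} (ht : a * t ^ 2 + b * t + c = 0) :
    t = x ∨ t = y := by
  have h : a * ((t - x) * (t - y)) = 0 := by
    linear_combination ht - t * quadratic_add_roots hxy hx hy + quadratic_mul_roots hxy hx hy
  rcases (mul_eq_zero.1 h).resolve_left ha |> mul_eq_zero.1 with h | h
  exacts [.inl (sub_eq_zero.1 h), .inr (sub_eq_zero.1 h)]

end Quadratic

theorem abs_le_discrim_of_pos_of_neg_roots {a b c : ℤ} {x y : ℝ} (ha : a ≠ 0) (hx : 0 < x)
    (hy : y < 0) (hxa : a * x ^ 2 + b * x + c = 0) (hya : a * y ^ 2 + b * y + c = 0) :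
    |a| ≤ discrim a b c ∧ |b| ≤ discrim a b c ∧ |c| ≤ discrim a b c := by
  have hac : a * c < 0 := by
    have hprod := quadratic_mul_roots (by linarith : x ≠ y) hxa hya
    have hneg : (a * c : ℝ) < 0 := by
      rw [← hprod]
      have : (0 : ℝ) < (a : ℝ) ^ 2 := by positivity
      nlinarith [mul_neg_of_pos_of_neg hx hy]
    exact_mod_cast hneg
  have hc : c ≠ 0 := by rintro rfl; simp at hac
  have ha_le : |a| ≤ |a * c| := by
    rw [abs_mul]
    exact le_mul_of_one_le_right (abs_nonneg a) (Int.one_le_abs hc)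
  have hc_le : |c| ≤ |a * c| := by
    rw [abs_mul]
    exact le_mul_of_one_le_left (abs_nonneg c) (Int.one_le_abs ha)
  have hb_le : |b| ≤ b ^ 2 := by
    rw [← sq_abs]
    exact Int.le_self_sq _
  rw [abs_of_neg hac] at ha_le hc_le
  refine ⟨?_, ?_, ?_⟩ <;> rw [discrim] <;> nlinarith [sq_nonneg b]

def AreConjugateRoots (Δ : ℤ) (x y : ℝ) : Prop :=
  x ≠ y ∧ ∃ a b c : ℤ, a ≠ 0 ∧ discrim a b c = Δ ∧
    a * x ^ 2 + b * x + c = 0 ∧ a * y ^ 2 + b * y + c = 0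

namespace AreConjugateRoots

variable {Δ : ℤ} {x y : ℝ}

theorem irrational_right (h : AreConjugateRoots Δ x y) (hx : Irrational x) : Irrational y := by
  obtain ⟨hxy, a, b, c, ha, -, hxa, hya⟩ := h
  have hsum := quadratic_add_roots hxy hxa hya
  have hy : y = ((-b / a : ℚ) : ℝ) - x := by
    push_cast
    field_simp
    linear_combination hsum
  exact hy ▸ hx.ratCast_sub _

theorem inv_sub (h : AreConjugateRoots Δ x y) {m : ℤ} (hx : x ≠ m) (hy : y ≠ m) :
    AreConjugateRoots Δ (x - m)⁻¹ (y - m)⁻¹ := by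
  obtain ⟨hxy, a, b, c, ha, hΔ, hxa, hya⟩ := h
  have hxm : x - m ≠ 0 := sub_ne_zero.2 hx
  have hym : y - m ≠ 0 := sub_ne_zero.2 hy
  refine ⟨fun h ↦ hxy (by simpa using h), a * m ^ 2 + b * m + c, 2 * a * m + b, a, ?_,
    by rw [← hΔ, discrim, discrim]; ring, ?_, ?_⟩
  · intro h0
    have h0 : (a : ℝ) * (m : ℝ) ^ 2 + b * m + c = 0 := by exact_mod_cast h0
    rcases eq_or_eq_of_quadratic (by exact_mod_cast ha) hxy hxa hya h0 with h | h
    exacts [hx h.symm, hy h.symm]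
  · push_cast
    field_simp
    linear_combination hxa
  · push_cast
    field_simp
    linear_combination hya

theorem exists_sq_mul_sq_sub (h : AreConjugateRoots Δ x y) :
    ∃ a : ℤ, a ≠ 0 ∧ (a : ℝ) ^ 2 * (x - y) ^ 2 = Δ := by
  obtain ⟨hxy, a, b, c, ha, hΔ, hxa, hya⟩ := h
  refine ⟨a, ha, ?_⟩
  rw [← discrim_eq_sq_mul_sq_sub hxy hxa hya, ← hΔ]
  simp [discrim]

end AreConjugateRoots

theorem cfMap_of_irrational {x : ℝ} (hx : Irrational x) : cfMap x = (x - ⌊x⌋)⁻¹ := by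
  rw [cfMap, if_neg (Int.fract_ne_zero_iff.2 fun ⟨m, hm⟩ ↦ hx.ne_int m hm.symm), Int.fract]

theorem one_lt_cfMap {x : ℝ} (hx : Irrational x) : 1 < cfMap x := by
  rw [cfMap_of_irrational hx, ← Int.fract]
  have hfract : 0 < Int.fract x :=
    Int.fract_pos.2 fun h ↦ hx.ne_int _ h
  exact one_lt_inv_iff₀.2 ⟨hfract, Int.fract_lt_one x⟩

theorem Irrational.cfMap_iterate {x : ℝ} (hx : Irrational x) (k : ℕ) :
    Irrational (cfMap^[k] x) := by
  induction k with
  | zero => exact hx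
  | succ k ih =>
    rw [Function.iterate_succ_apply', cfMap_of_irrational ih]
    exact (ih.sub_intCast _).inv

theorem cfMap_iterate_succ {x : ℝ} (hx : Irrational x) (k : ℕ) :
    cfMap^[k + 1] x = (cfMap^[k] x - cfa x k)⁻¹ := by
  rw [Function.iterate_succ_apply', cfMap_of_irrational (hx.cfMap_iterate k), cfa]

theorem one_le_cfa_succ {x : ℝ} (hx : Irrational x) (k : ℕ) : 1 ≤ cfa x (k + 1) := by
  rw [cfa, Int.le_floor, Int.cast_one, Function.iterate_succ_apply']
  exact (one_lt_cfMap (hx.cfMap_iterate k)).le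

theorem periodLength_le_of_iterate_eq {x : ℝ} (hx : Irrational x) {i j : ℕ} (hij : i < j)
    (h : cfMap^[i] x = cfMap^[j] x) : periodLength x ≤ j - i := by
  rw [periodLength, if_pos hx]
  refine Nat.sInf_le ⟨by omega, i, fun n hn ↦ ?_⟩
  obtain ⟨l, rfl⟩ := Nat.exists_eq_add_of_le hn
  rw [cfa, cfa, show i + l + (j - i) = l + j by omega, Function.iterate_add_apply, ← h,
    ← Function.iterate_add_apply, add_comm l i]

/-- `conjOrbit x y k` is `y` pushed through the same maps `t ↦ (t - cfa x i)⁻¹` that carry `x`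
to its `k`-th complete quotient `cfMap^[k] x`. -/
noncomputable def conjOrbit (x y : ℝ) : ℕ → ℝ
  | 0 => y
  | k + 1 => (conjOrbit x y k - cfa x k)⁻¹

theorem conjOrbit_neg_of_le {x y : ℝ} (hx : Irrational x) {k : ℕ}
    (hk : conjOrbit x y (k + 1) < 0) {n : ℕ} (hn : k ≤ n) : conjOrbit x y (n + 1) < 0 := by
  induction n, hn using Nat.le_induction with
  | base => exact hk
  | succ n _ ih =>
    have hcfa : (1 : ℝ) ≤ cfa x (n + 1) := by exact_mod_cast one_le_cfa_succ hx n
    exact inv_lt_zero.2 (by linarith)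

namespace AreConjugateRoots

variable {Δ : ℤ} {x y : ℝ}

theorem cfMap_iterate (h : AreConjugateRoots Δ x y) (hx : Irrational x) (k : ℕ) :
    AreConjugateRoots Δ (cfMap^[k] x) (conjOrbit x y k) := by
  induction k with
  | zero => exact h
  | succ k ih =>
    rw [cfMap_iterate_succ hx, conjOrbit]
    have hxk := hx.cfMap_iterate k
    exact ih.inv_sub (hxk.ne_int _) ((ih.irrational_right hxk).ne_int _)

theorem sq_sub_lt_sq_sub_succ (h : AreConjugateRoots Δ x y) (hx : Irrational x) {k : ℕ}
    (hY : 1 < conjOrbit x y (k + 1)) :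
    (cfMap^[k] x - conjOrbit x y k) ^ 2 < (cfMap^[k + 1] x - conjOrbit x y (k + 1)) ^ 2 := by
  have hroots := h.cfMap_iterate hx k
  have hxk := hx.cfMap_iterate k
  have hswap : cfMap^[k + 1] x - conjOrbit x y (k + 1) =
      cfMap^[k + 1] x * (conjOrbit x y k - cfMap^[k] x) * conjOrbit x y (k + 1) := by
    rw [cfMap_iterate_succ hx k, conjOrbit,
      inv_sub_inv' (sub_ne_zero.2 (hxk.ne_int _))
        (sub_ne_zero.2 ((hroots.irrational_right hxk).ne_int _)),
      sub_sub_sub_cancel_right]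
  have hX : 1 < cfMap^[k + 1] x := by
    rw [Function.iterate_succ_apply']
    exact one_lt_cfMap hxk
  have hprod : 1 < (cfMap^[k + 1] x * conjOrbit x y (k + 1)) ^ 2 :=
    one_lt_pow₀ (one_lt_mul_of_lt_of_le hX hY.le) two_ne_zero
  have hd : 0 < (cfMap^[k] x - conjOrbit x y k) ^ 2 := by
    have := sub_ne_zero.2 hroots.1
    positivity
  calc _ < (cfMap^[k] x - conjOrbit x y k) ^ 2 * (cfMap^[k + 1] x * conjOrbit x y (k + 1)) ^ 2 :=
        lt_mul_of_one_lt_right hd hprod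
    _ = _ := by rw [hswap]; ring

theorem exists_conjOrbit_neg (h : AreConjugateRoots Δ x y) (hx : Irrational x) :
    ∃ k, conjOrbit x y (k + 1) < 0 := by
  by_contra! hnonneg
  have hY (k : ℕ) : 1 < conjOrbit x y (k + 1) := by
    have hirr := (h.cfMap_iterate hx (k + 1)).irrational_right (hx.cfMap_iterate _)
    have hpos : 0 < conjOrbit x y (k + 1) - cfa x (k + 1) :=
      (inv_nonneg.1 (hnonneg (k + 1))).lt_of_ne (sub_ne_zero.2 (hirr.ne_int _)).symm
    have hcfa : (1 : ℝ) ≤ cfa x (k + 1) := by exact_mod_cast one_le_cfa_succ hx k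
    linarith
  -- `a ^ 2 * (x - y) ^ 2 = Δ` turns the growth of `|x - y|` into a descent of `|a|`.
  choose a ha hΔ using fun k ↦ (h.cfMap_iterate hx k).exists_sq_mul_sq_sub
  obtain ⟨k, hk⟩ := WellFounded.not_rel_apply_succ (r := (· < ·)) fun k ↦ (a (k + 1)).natAbs
  apply hk
  have hsq : ((a (k + 2)) ^ 2 : ℝ) < (a (k + 1)) ^ 2 := by
    have hpos : (0 : ℝ) < (a (k + 1)) ^ 2 := by have := ha (k + 1); positivity
    nlinarith [h.sq_sub_lt_sq_sub_succ hx (hY (k + 1)), hΔ (k + 1), hΔ (k + 2)]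
  exact Int.natAbs_lt_iff_sq_lt.2 (by exact_mod_cast hsq)

theorem periodLength_le (h : AreConjugateRoots Δ x y) (hx : Irrational x) :
    periodLength x ≤ (2 * Δ.toNat + 1) ^ 3 := by
  obtain ⟨k, hk⟩ := h.exists_conjOrbit_neg hx
  have hreduced (n : ℕ) : 0 < cfMap^[k + 1 + n] x ∧ conjOrbit x y (k + 1 + n) < 0 := by
    rw [show k + 1 + n = k + n + 1 by omega, Function.iterate_succ_apply']
    exact ⟨one_pos.trans (one_lt_cfMap (hx.cfMap_iterate _)), conjOrbit_neg_of_le hx hk (by omega)⟩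
  choose a b c ha hΔ hX hY using fun n ↦ (h.cfMap_iterate hx (k + 1 + n)).2
  set M := (2 * Δ.toNat + 1) ^ 3
  have hbox : ∀ n ∈ Finset.range (M + 1),
      (a n, b n, c n) ∈ Finset.Icc (-Δ) Δ ×ˢ Finset.Icc (-Δ) Δ ×ˢ Finset.Icc (-Δ) Δ := by
    intro n _
    obtain ⟨haΔ, hbΔ, hcΔ⟩ :=
      abs_le_discrim_of_pos_of_neg_roots (ha n) (hreduced n).1 (hreduced n).2 (hX n) (hY n)
    rw [hΔ n] at haΔ hbΔ hcΔ
    simp only [Finset.mem_product, Finset.mem_Icc]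
    exact ⟨abs_le.1 haΔ, abs_le.1 hbΔ, abs_le.1 hcΔ⟩
  have hcard : (Finset.Icc (-Δ) Δ ×ˢ Finset.Icc (-Δ) Δ ×ˢ Finset.Icc (-Δ) Δ).card <
      (Finset.range (M + 1)).card := by
    simp only [Finset.card_product, Int.card_Icc, Finset.card_range, M]
    have hside : (Δ + 1 - -Δ).toNat ≤ 2 * Δ.toNat + 1 := by omega
    rw [Nat.lt_succ_iff, pow_three]
    exact Nat.mul_le_mul hside (Nat.mul_le_mul hside hside)
  have hiterate_eq : ∀ i j, (a i, b i, c i) = (a j, b j, c j) →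
      cfMap^[k + 1 + i] x = cfMap^[k + 1 + j] x := by
    intro i j hij
    simp only [Prod.mk.injEq] at hij
    obtain ⟨hai, hbi, hci⟩ := hij
    have hXj := hX j
    rw [← hai, ← hbi, ← hci] at hXj
    refine (eq_or_eq_of_quadratic (Int.cast_ne_zero.2 (ha i)) (h.cfMap_iterate hx _).1
      (hX i) (hY i) hXj).resolve_right (fun heq ↦ ?_) |>.symm
    linarith [(hreduced i).2, (hreduced j).1]
  obtain ⟨i, hi, j, hj, hij, hsame⟩ := Finset.exists_ne_map_eq_of_card_lt_of_maps_to hcard hbox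
  rw [Finset.mem_range] at hi hj
  rcases hij.lt_or_gt with hlt | hlt
  · exact (periodLength_le_of_iterate_eq hx (by omega) (hiterate_eq i j hsame)).trans
      (by omega)
  · exact (periodLength_le_of_iterate_eq hx (by omega) (hiterate_eq j i hsame.symm)).trans
      (by omega)

end AreConjugateRoots

theorem AlgEquiv.apply_apply_of_finrank_eq_two {F L : Type*} [Field F] [Field L] [Algebra F L]
    (hL : Module.finrank F L = 2) (σ : L ≃ₐ[F] L) (x : L) : σ (σ x) = x := by
  have : FiniteDimensional F L := Module.finite_of_finrank_eq_succ hL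
  have hσ2 : σ ^ 2 = 1 := by
    obtain ⟨n, hn0, hn2, hσn⟩ : ∃ n, 0 < n ∧ n ≤ 2 ∧ σ ^ n = 1 :=
      ⟨orderOf σ, orderOf_pos σ, orderOf_le_card_univ.trans (hL ▸ AlgEquiv.card_le),
        pow_orderOf_eq_one σ⟩
    interval_cases n
    · rw [pow_one] at hσn
      rw [hσn, one_pow]
    · exact hσn
  simpa [pow_two] using congr($hσ2 x)

theorem exists_sq_eq_algebraMap_of_apply_eq_neg {F L : Type*} [Field F] [NeZero (2 : F)] [Field L]
    [Algebra F L] (hL : Module.finrank F L = 2) (σ : L ≃ₐ[F] L) {β : L}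
    (hβ : β ∉ Set.range (algebraMap F L)) (hσβ : σ β = -β) :
    ∃ s : F, β ^ 2 = algebraMap F L s := by
  have hind : LinearIndependent F ![β, 1] := linearIndependent_fin2.2
    ⟨one_ne_zero, fun a h ↦ hβ ⟨a, by rwa [Algebra.algebraMap_eq_smul_one]⟩⟩
  have hspan := hind.span_eq_top_of_card_eq_finrank (by simp [hL])
  rw [Matrix.range_cons_cons_empty] at hspan
  obtain ⟨t, r, htr⟩ := Submodule.mem_span_pair.1 (hspan ▸ Submodule.mem_top : β ^ 2 ∈ _)
  have hσ : -(t • β) + r • 1 = β ^ 2 := by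
    simpa [hσβ, map_smul] using congr(σ $htr)
  have ht : t = 0 := by
    have h2t : (2 * t) • β = 0 := by rw [mul_smul, two_smul]; linear_combination htr - hσ
    have hβ0 : β ≠ 0 := fun h ↦ hβ ⟨0, by rw [h, map_zero]⟩
    simpa [hβ0, two_ne_zero] using h2t
  exact ⟨r, by rw [← htr, ht, zero_smul, zero_add, Algebra.algebraMap_eq_smul_one]⟩

theorem areConjugateRoots_of_add_of_sq_sub {x y : ℝ} {D : ℕ} {m : ℤ} {s : ℚ} (hD : 0 < D)
    (hs : 0 < s) (hadd : D * (x + y) = m) (hsub : (x - y) ^ 2 = s) :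
    AreConjugateRoots (16 * D ^ 4 * s.den * s.num) x y := by
  have hxy : x ≠ y := fun h ↦ by
    rw [h, sub_self, zero_pow two_ne_zero] at hsub
    exact hs.ne (by exact_mod_cast hsub)
  have hsub' : (x - y) ^ 2 * s.den = s.num := by
    rw [hsub, Rat.cast_def]
    field_simp
  refine ⟨hxy, 4 * D ^ 2 * s.den, -(4 * D * s.den * m), s.den * m ^ 2 - s.num * D ^ 2,
    by positivity, by rw [discrim]; ring, ?_, ?_⟩
  · push_cast
    linear_combination (D : ℝ) ^ 2 * hsub' + s.den * (3 * D * x - D * y - m) * hadd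
  · push_cast
    linear_combination (D : ℝ) ^ 2 * hsub' + s.den * (3 * D * y - D * x - m) * hadd

theorem stmt_18_general (K : IntermediateField ℚ ℝ) (hK : Module.finrank ℚ K = 2)
    (conj : K ≃ₐ[ℚ] K)
    (A : ℕ → K) (hirr : ∀ n : ℕ, Irrational (A n : ℝ))
    (β : K) (hβ : Irrational (β : ℝ))
    (hdiff : (∀ n : ℕ, A n - conj (A n) = β) ∨ (∀ n : ℕ, A n - conj (A n) = (-1 : K) ^ n * β))
    (hden : ∃ D : ℕ, 0 < D ∧ ∀ n : ℕ, ∃ m : ℤ, (D : K) * (A n + conj (A n)) = (m : K)) :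
    ∃ B : ℕ, ∀ n : ℕ, periodLength (A n : ℝ) ≤ B := by
  obtain ⟨D, hD, hden⟩ := hden
  have hsq (n : ℕ) : (A n - conj (A n)) ^ 2 = β ^ 2 := by
    rcases hdiff with h | h <;> simp [h n, mul_pow, ← pow_mul, pow_mul']
  have hconjβ : conj β = -β := by
    have h0 : A 0 - conj (A 0) = β := by rcases hdiff with h | h <;> simpa using h 0
    have h1 := congr(conj $h0)
    rw [map_sub, conj.apply_apply_of_finrank_eq_two hK] at h1
    linear_combination -h1 - h0
  obtain ⟨s, hs⟩ := exists_sq_eq_algebraMap_of_apply_eq_neg hK conj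
    (fun ⟨q, hq⟩ ↦ hβ ⟨q, by simp [← hq]⟩) hconjβ
  have hsβ : (β : ℝ) ^ 2 = s := by simpa using congr(($hs : ℝ))
  have hs0 : 0 < s := by
    have := hβ.ne_zero
    exact_mod_cast hsβ ▸ (by positivity : (0 : ℝ) < (β : ℝ) ^ 2)
  refine ⟨(2 * (16 * D ^ 4 * s.den * s.num).toNat + 1) ^ 3, fun n ↦ ?_⟩
  obtain ⟨m, hm⟩ := hden n
  refine AreConjugateRoots.periodLength_le
    (areConjugateRoots_of_add_of_sq_sub (y := conj (A n)) (m := m) hD hs0 ?_ ?_) (hirr n)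
  · simpa using congr(($hm : ℝ))
  · rw [← hsβ]
    simpa using congr(($(hsq n) : ℝ))

/-- sequences of irrational elements of a real quadratic field whose conjugate
difference is essentially constant (equal to `β` or `(-1)^n β` for a fixed irrational `β`)
and whose trace sequence has bounded denominators have bounded period lengths. -/
theorem stmt_18 (K : IntermediateField ℚ ℝ) (hK : Module.finrank ℚ K = 2)
    (conj : K ≃ₐ[ℚ] K) (hconj : conj ≠ AlgEquiv.refl)
    (A : ℕ → K) (hirr : ∀ n : ℕ, Irrational (A n : ℝ))
    (β : K) (hβ : Irrational (β : ℝ))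
    (hdiff : (∀ n : ℕ, A n - conj (A n) = β) ∨ (∀ n : ℕ, A n - conj (A n) = (-1 : K) ^ n * β))
    (hden : ∃ D : ℕ, 0 < D ∧ ∀ n : ℕ, ∃ m : ℤ, (D : K) * (A n + conj (A n)) = (m : K)) :
    ∃ B : ℕ, ∀ n : ℕ, periodLength (A n : ℝ) ≤ B :=
  stmt_18_general K hK conj A hirr β hβ hdiff hden
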